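/- arXiv:1910.06681 — 3 statements merged into one kernel-verified Lean document; each statement's English description precedes it below -/
import Mathlib

section
/- Let γ:[0,1]→H be a nonconstant geodesic. Then there exist ω>0 and a strictly increasing C¹ bijection τ:[−ω,ω]→[0,1] such that x:=γ∘τ is a C² curve with values in ℝ²∖{0} satisfying ẍ(t)=−x(t)/|x(t)|³ for all t∈(−ω,ω) and (1/2)|ẋ(t)|²−1/|x(t)|=−1 for all t∈[−ω,ω]; in particular, every geodesic of (H,W⟨·,·⟩) can be reparameterized as a solution of the Kepler equation with energy −1. -/
noncomputable section
open Set Real Filter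
open scoped RealInnerProductSpace

/-- The Euclidean plane. -/
abbrev E2 := EuclideanSpace ℝ (Fin 2)

/-- The point (a, b) of the Euclidean plane. -/
def pt (a b : ℝ) : E2 := (WithLp.equiv 2 (Fin 2 → ℝ)).symm ![a, b]

/-- Velocity of a curve defined on the interval [-ω, ω]. -/
def vel (ω : ℝ) (x : ℝ → E2) (t : ℝ) : E2 := derivWithin x (Icc (-ω) ω) t

/-- Solution of the fixed-energy (h = -1) Kepler problem on [-ω, ω]:
a C² curve in ℝ² ∖ {0} with ẍ = -x/|x|³ on (-ω, ω) and (1/2)|ẋ|² - 1/|x| = -1 on [-ω, ω]. -/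
def IsKeplerSol (ω : ℝ) (x : ℝ → E2) : Prop :=
  0 < ω ∧ ContDiffOn ℝ 2 x (Icc (-ω) ω) ∧
  (∀ t ∈ Icc (-ω) ω, x t ≠ 0) ∧
  (∀ t ∈ Ioo (-ω) ω,
    derivWithin (vel ω x) (Icc (-ω) ω) t = -(‖x t‖ ^ 3)⁻¹ • x t) ∧
  (∀ t ∈ Icc (-ω) ω, (1/2) * ‖vel ω x t‖ ^ 2 - ‖x t‖⁻¹ = -1)

/-- Solution of problem (K) on [-ω, ω] with endpoints p, q. -/
def IsKeplerSolPQ (ω : ℝ) (p q : E2) (x : ℝ → E2) : Prop :=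
  IsKeplerSol ω x ∧ x (-ω) = p ∧ x ω = q

/-- Angular momentum c_x = x₁ẋ₂ - x₂ẋ₁ (a constant of motion, evaluated at t = 0). -/
def angMom (ω : ℝ) (x : ℝ → E2) : ℝ :=
  x 0 0 * vel ω x 0 1 - x 0 1 * vel ω x 0 0

/-- The Hill region H = {x ∈ ℝ² : 0 < |x| < 1}. -/
def Hill : Set E2 := {x | 0 < ‖x‖ ∧ ‖x‖ < 1}

/-- The conformal factor W(x) = 1/|x| - 1. -/
def Wf (x : E2) : ℝ := ‖x‖⁻¹ - 1

/-- The gradient ∇W(x) = -x/|x|³. -/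
def gradW (x : E2) : E2 := -(‖x‖ ^ 3)⁻¹ • x

/-- Velocity of a curve defined on [0, 1]. -/
def gvel (γ : ℝ → E2) (s : ℝ) : E2 := derivWithin γ (Icc 0 1) s

/-- Geodesic of the conformal metric W(x)⟨·,·⟩ on the Hill region, parameterized on [0,1]:
a C² curve with values in H satisfying (d/ds)(W(γ)γ̇) = (1/2)|γ̇|²∇W(γ). -/
def IsGeodesic (γ : ℝ → E2) : Prop :=
  ContDiffOn ℝ 2 γ (Icc 0 1) ∧ (∀ s ∈ Icc (0:ℝ) 1, γ s ∈ Hill) ∧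
  ∀ s ∈ Ioo (0:ℝ) 1,
    derivWithin (fun u => Wf (γ u) • gvel γ u) (Icc 0 1) s
      = ((1/2) * ‖gvel γ s‖ ^ 2) • gradW (γ s)


lemma contDiffAt_Wf {x : E2} (hx : x ≠ 0) : ContDiffAt ℝ 2 Wf x := by
  have h1 : ContDiffAt ℝ 2 (fun y : E2 => ‖y‖) x := contDiffAt_norm ℝ hx
  exact (h1.inv (norm_pos_iff.2 hx).ne').sub contDiffAt_const

lemma hasDerivWithinAt_Wf_comp {c : ℝ → E2} {v : E2} {s : Set ℝ} {x0 : ℝ}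
    (hc : HasDerivWithinAt c v s x0) (h0 : c x0 ≠ 0) :
    HasDerivWithinAt (fun u => Wf (c u)) ⟪gradW (c x0), v⟫ s x0 := by
  have hn : (0:ℝ) < ‖c x0‖ := norm_pos_iff.2 h0
  have hQ : HasDerivWithinAt (fun u => ⟪c u, c u⟫) (⟪c x0, v⟫ + ⟪v, c x0⟫) s x0 :=
    hc.inner ℝ hc
  have hQx : ⟪c x0, c x0⟫ ≠ 0 := by
    rw [real_inner_self_eq_norm_sq]; positivity
  have hsq : HasDerivWithinAt (fun u => Real.sqrt ⟪c u, c u⟫)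
      (1 / (2 * Real.sqrt ⟪c x0, c x0⟫) * (⟪c x0, v⟫ + ⟪v, c x0⟫)) s x0 :=
    (Real.hasDerivAt_sqrt hQx).comp_hasDerivWithinAt x0 hQ
  have hsqx : Real.sqrt ⟪c x0, c x0⟫ = ‖c x0‖ := by
    rw [real_inner_self_eq_norm_sq, Real.sqrt_sq (norm_nonneg _)]
  have hsqne : Real.sqrt ⟪c x0, c x0⟫ ≠ 0 := by rw [hsqx]; exact hn.ne'
  have hinv := (hsq.inv hsqne).sub_const 1
  have heq : (fun u => (Real.sqrt ⟪c u, c u⟫)⁻¹ - 1) = (fun u => Wf (c u)) := by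
    funext u
    rw [Wf, real_inner_self_eq_norm_sq, Real.sqrt_sq (norm_nonneg _)]
  simp only [Pi.inv_apply] at hinv
  rw [heq] at hinv
  refine hinv.congr_deriv ?_
  symm
  rw [hsqx, gradW, real_inner_smul_left, real_inner_comm (c x0) v]
  field_simp
  ring

open scoped Topology
/-- Converse Maupertuis principle (Remark rem_geoellisse): every nonconstant geodesic of
(H, W⟨·,·⟩) can be reparameterized as a solution of the Kepler equation with energy -1. -/
theorem geodesic_to_kepler (γ : ℝ → E2) (hγ : IsGeodesic γ)
    (hnc : ∃ s₁ ∈ Icc (0:ℝ) 1, ∃ s₂ ∈ Icc (0:ℝ) 1, γ s₁ ≠ γ s₂) :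
    ∃ ω : ℝ, 0 < ω ∧ ∃ τ : ℝ → ℝ,
      StrictMonoOn τ (Icc (-ω) ω) ∧ ContDiffOn ℝ 1 τ (Icc (-ω) ω) ∧
      τ (-ω) = 0 ∧ τ ω = 1 ∧ (∀ t ∈ Icc (-ω) ω, τ t ∈ Icc (0:ℝ) 1) ∧
      IsKeplerSol ω (γ ∘ τ) := by
  obtain ⟨hC, hH, hgeo⟩ := hγ
  have hUI : UniqueDiffOn ℝ (Icc (0:ℝ) 1) := uniqueDiffOn_Icc one_pos
  set v : ℝ → E2 := gvel γ with hv_def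
  have hγ0 : ∀ s ∈ Icc (0:ℝ) 1, γ s ≠ 0 := fun s hs => norm_pos_iff.1 (hH s hs).1
  have hWpos : ∀ s ∈ Icc (0:ℝ) 1, 0 < Wf (γ s) := by
    intro s hs
    have h1 : 0 < ‖γ s‖ := (hH s hs).1
    have h2 : ‖γ s‖ < 1 := (hH s hs).2
    have h3 : 1 < ‖γ s‖⁻¹ := (one_lt_inv₀ h1).2 h2
    simpa [Wf] using sub_pos.2 h3
  have hγdiff : DifferentiableOn ℝ γ (Icc (0:ℝ) 1) := hC.differentiableOn (by norm_num)
  have hvd : ∀ s ∈ Icc (0:ℝ) 1, HasDerivWithinAt γ (v s) (Icc (0:ℝ) 1) s := fun s hs =>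
    (hγdiff s hs).hasDerivWithinAt
  -- v is C¹
  have hCv : ContDiffOn ℝ 1 v (Icc (0:ℝ) 1) := by
    have h2 : ContDiffOn ℝ (1+1) γ (Icc (0:ℝ) 1) := by norm_num; exact hC
    exact ((contDiffOn_succ_iff_derivWithin hUI).1 h2).2.2
  have hvdiff : DifferentiableOn ℝ v (Icc (0:ℝ) 1) := hCv.differentiableOn one_ne_zero
  set a : ℝ → E2 := fun s => derivWithin v (Icc (0:ℝ) 1) s with ha_def
  have had : ∀ s ∈ Icc (0:ℝ) 1, HasDerivWithinAt v (a s) (Icc (0:ℝ) 1) s := fun s hs =>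
    (hvdiff s hs).hasDerivWithinAt
  have hfd : ∀ s ∈ Icc (0:ℝ) 1,
      HasDerivWithinAt (fun u => Wf (γ u)) ⟪gradW (γ s), v s⟫ (Icc (0:ℝ) 1) s := fun s hs =>
    hasDerivWithinAt_Wf_comp (hvd s hs) (hγ0 s hs)
  -- momentum equation: extract f • a on the interior
  have hmom : ∀ s ∈ Ioo (0:ℝ) 1, Wf (γ s) • a s
      = ((1/2) * ‖v s‖^2) • gradW (γ s) - ⟪gradW (γ s), v s⟫ • v s := by
    intro s hs
    have hsI : s ∈ Icc (0:ℝ) 1 := Ioo_subset_Icc_self hs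
    have hp : HasDerivWithinAt (fun u => Wf (γ u) • v u)
        (Wf (γ s) • a s + ⟪gradW (γ s), v s⟫ • v s) (Icc (0:ℝ) 1) s :=
      (hfd s hsI).smul (had s hsI)
    have h1 : derivWithin (fun u => Wf (γ u) • v u) (Icc (0:ℝ) 1) s
        = Wf (γ s) • a s + ⟪gradW (γ s), v s⟫ • v s := hp.derivWithin (hUI s hsI)
    have h2 := hgeo s hs
    rw [h1] at h2
    have := h2
    linear_combination (norm := module) this
  -- energy function
  set Egy : ℝ → ℝ := fun s => Wf (γ s) * ⟪v s, v s⟫ with hE_def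
  have hEcont : ContinuousOn Egy (Icc (0:ℝ) 1) := by
    have hWc : ContinuousOn (fun u => Wf (γ u)) (Icc (0:ℝ) 1) := by
      have : ContinuousOn (fun u => ‖γ u‖) (Icc (0:ℝ) 1) := hC.continuousOn.norm
      exact (this.inv₀ (fun s hs => (hH s hs).1.ne')).sub continuousOn_const
    exact hWc.mul (hCv.continuousOn.inner hCv.continuousOn)
  have hEd : ∀ s ∈ Ioo (0:ℝ) 1, HasDerivAt Egy 0 s := by
    intro s hs
    have hsI : s ∈ Icc (0:ℝ) 1 := Ioo_subset_Icc_self hs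
    have hIs : Icc (0:ℝ) 1 ∈ 𝓝 s := Icc_mem_nhds hs.1 hs.2
    have hfA : HasDerivAt (fun u => Wf (γ u)) ⟪gradW (γ s), v s⟫ s := (hfd s hsI).hasDerivAt hIs
    have hvA : HasDerivAt v (a s) s := (had s hsI).hasDerivAt hIs
    have hiA : HasDerivAt (fun u => ⟪v u, v u⟫) (⟪v s, a s⟫ + ⟪a s, v s⟫) s := hvA.inner ℝ hvA
    have hP := hfA.mul hiA
    have hWa : ⟪v s, Wf (γ s) • a s⟫
        = (1/2) * ‖v s‖^2 * ⟪v s, gradW (γ s)⟫ - ⟪gradW (γ s), v s⟫ * ⟪v s, v s⟫ := by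
      rw [hmom s hs, inner_sub_right, real_inner_smul_right, real_inner_smul_right]
      try ring
    rw [real_inner_smul_right] at hWa
    have hsym : ⟪a s, v s⟫ = ⟪v s, a s⟫ := real_inner_comm _ _
    have hsym2 : ⟪v s, gradW (γ s)⟫ = ⟪gradW (γ s), v s⟫ := real_inner_comm _ _
    have hnv : ‖v s‖^2 = ⟪v s, v s⟫ := (real_inner_self_eq_norm_sq _).symm
    rw [hsym2, hnv] at hWa
    have h0 : ⟪gradW (γ s), v s⟫ * ⟪v s, v s⟫ + Wf (γ s) * (⟪v s, a s⟫ + ⟪a s, v s⟫) = 0 := by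
      rw [hsym]; linarith [hWa]
    rw [← h0]
    exact hP
  -- energy is constant
  have hconstIoo : ∀ s ∈ Ioo (0:ℝ) 1, ∀ s' ∈ Ioo (0:ℝ) 1, Egy s = Egy s' := by
    have key : ∀ p q : ℝ, p ∈ Ioo (0:ℝ) 1 → q ∈ Ioo (0:ℝ) 1 → p ≤ q → Egy q = Egy p := by
      intro p q hp hq hpq
      have hsub : Icc p q ⊆ Ioo (0:ℝ) 1 := fun x hx =>
        ⟨lt_of_lt_of_le hp.1 hx.1, lt_of_le_of_lt hx.2 hq.2⟩
      exact constant_of_has_deriv_right_zero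
        (hEcont.mono (hsub.trans Ioo_subset_Icc_self))
        (fun x hx => ((hEd x (hsub (Ico_subset_Icc_self hx))).hasDerivWithinAt))
        q (right_mem_Icc.2 hpq)
    intro s hs s' hs'
    rcases le_total s s' with h | h
    · exact (key s s' hs hs' h).symm
    · exact key s' s hs' hs h
  have hmem_half : (1/2 : ℝ) ∈ Ioo (0:ℝ) 1 := by norm_num
  have hall : ∀ s ∈ Icc (0:ℝ) 1, Egy s = Egy (1/2) := by
    intro s hs
    have hclos : s ∈ closure (Ioo (0:ℝ) 1) := by
      rw [closure_Ioo (by norm_num : (0:ℝ) ≠ 1)]; exact hs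
    have hne : (𝓝[Ioo (0:ℝ) 1] s).NeBot := mem_closure_iff_nhdsWithin_neBot.1 hclos
    have h1 : Tendsto Egy (𝓝[Ioo (0:ℝ) 1] s) (𝓝 (Egy s)) :=
      (hEcont s hs).mono_left (nhdsWithin_mono _ Ioo_subset_Icc_self)
    have h2 : Tendsto Egy (𝓝[Ioo (0:ℝ) 1] s) (𝓝 (Egy (1/2))) := by
      refine Tendsto.congr' ?_ tendsto_const_nhds
      filter_upwards [self_mem_nhdsWithin] with u hu
      exact (hconstIoo u hu _ hmem_half).symm
    exact tendsto_nhds_unique h1 h2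
  set c2 : ℝ := Egy (1/2) with hc2_def
  have hc2pos : 0 < c2 := by
    rcases lt_or_ge 0 c2 with h | h
    · exact h
    exfalso
    have hv0 : ∀ s ∈ Icc (0:ℝ) 1, v s = 0 := by
      intro s hs
      have h1 : Wf (γ s) * ⟪v s, v s⟫ = c2 := hall s hs
      have h2 : (0:ℝ) ≤ ⟪v s, v s⟫ := real_inner_self_nonneg
      have h3 : 0 < Wf (γ s) := hWpos s hs
      have h4 : ⟪v s, v s⟫ = 0 := by nlinarith
      exact inner_self_eq_zero.1 h4
    obtain ⟨s₁, hs₁, s₂, hs₂, hne⟩ := hnc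
    have hcst := constant_of_derivWithin_zero hγdiff
      (fun x hx => hv0 x (Ico_subset_Icc_self hx))
    exact hne ((hcst s₁ hs₁).trans (hcst s₂ hs₂).symm)
  -- part 2: reparameterization
  set c : ℝ := Real.sqrt c2 with hc_def
  have hc : 0 < c := Real.sqrt_pos.2 hc2pos
  have hcc : c^2 = c2 := Real.sq_sqrt hc2pos.le
  have hr2sq : Real.sqrt 2 * Real.sqrt 2 = 2 := Real.mul_self_sqrt (by norm_num)
  have hvnorm : ∀ s ∈ Icc (0:ℝ) 1, ‖v s‖^2 = c2 / Wf (γ s) := by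
    intro s hs
    have h1 : Wf (γ s) * ⟪v s, v s⟫ = c2 := hall s hs
    rw [real_inner_self_eq_norm_sq] at h1
    rw [eq_div_iff (hWpos s hs).ne']
    linarith [h1]
  set clamp : ℝ → ℝ := fun u => min 1 (max 0 u) with hclamp_def
  have hclamp_mem : ∀ u, clamp u ∈ Icc (0:ℝ) 1 := fun u =>
    ⟨le_min one_pos.le (le_max_left 0 u), min_le_left _ _⟩
  have hclamp_id : ∀ u ∈ Icc (0:ℝ) 1, clamp u = u := by
    intro u hu
    simp only [hclamp_def, max_eq_right hu.1, min_eq_right hu.2]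
  have hclamp_cont : Continuous clamp := continuous_const.min (continuous_const.max continuous_id)
  set ρ : ℝ → ℝ := fun u => c / (Real.sqrt 2 * Wf (γ (clamp u))) with hρ_def
  have hγc : Continuous fun u => γ (clamp u) :=
    hC.continuousOn.comp_continuous hclamp_cont hclamp_mem
  have hWc : Continuous fun u => Wf (γ (clamp u)) := by
    have h1 : Continuous fun u => ‖γ (clamp u)‖ := hγc.norm
    have h2 : Continuous fun u => ‖γ (clamp u)‖⁻¹ :=
      h1.inv₀ fun u => (hH _ (hclamp_mem u)).1.ne'
    exact h2.sub continuous_const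
  have hWcpos : ∀ u, 0 < Wf (γ (clamp u)) := fun u => hWpos _ (hclamp_mem u)
  have hρcont : Continuous ρ := continuous_const.div (continuous_const.mul hWc)
    (fun u => (mul_pos (Real.sqrt_pos.2 two_pos) (hWcpos u)).ne')
  have hρpos : ∀ u, 0 < ρ u := fun u =>
    div_pos hc (mul_pos (Real.sqrt_pos.2 two_pos) (hWcpos u))
  set ω : ℝ := (∫ u in (0:ℝ)..1, ρ u)/2 with hω_def
  set σ : ℝ → ℝ := fun s => (∫ u in (0:ℝ)..s, ρ u) - ω with hσ_def
  have hω : 0 < ω := by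
    have h1 := intervalIntegral.intervalIntegral_pos_of_pos
      (hρcont.intervalIntegrable 0 1) hρpos one_pos
    exact half_pos h1
  have hσd : ∀ t, HasDerivAt σ (ρ t) t := by
    intro t
    have h1 := intervalIntegral.integral_hasDerivAt_right (hρcont.intervalIntegrable 0 t)
      (hρcont.stronglyMeasurableAtFilter _ _) hρcont.continuousAt
    exact h1.sub_const _
  have hσcont : Continuous σ :=
    Differentiable.continuous (fun t => (hσd t).differentiableAt)
  have hσmono : StrictMono σ := by
    refine strictMono_of_deriv_pos fun t => ?_
    rw [(hσd t).deriv]; exact hρpos t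
  have hσ0 : σ 0 = -ω := by
    simp only [hσ_def, intervalIntegral.integral_same, zero_sub]
  have hσ1 : σ 1 = ω := by
    simp only [hσ_def, hω_def]; ring
  have htail_hi : ∀ s, 1 ≤ s → σ s = σ 1 + ρ 1 * (s - 1) := by
    intro s hs1
    have hadd : (∫ u in (0:ℝ)..1, ρ u) + (∫ u in (1:ℝ)..s, ρ u) = ∫ u in (0:ℝ)..s, ρ u :=
      intervalIntegral.integral_add_adjacent_intervals (hρcont.intervalIntegrable 0 1)
        (hρcont.intervalIntegrable 1 s)
    have hone : clamp (1:ℝ) = 1 := hclamp_id 1 (by norm_num)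
    have hcongr : (∫ u in (1:ℝ)..s, ρ u) = ∫ u in (1:ℝ)..s, ρ 1 := by
      apply intervalIntegral.integral_congr
      intro u hu
      rw [uIcc_of_le hs1] at hu
      have hcl : clamp u = 1 := by
        simp only [hclamp_def, max_eq_right (le_trans zero_le_one hu.1), min_eq_left hu.1]
      simp only [hρ_def, hcl, hone]
    have hconst : (∫ u in (1:ℝ)..s, ρ 1) = (s - 1) * ρ 1 := by
      rw [intervalIntegral.integral_const, smul_eq_mul]
    have : σ s = ((∫ u in (0:ℝ)..1, ρ u) + (s - 1) * ρ 1) - ω := by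
      rw [hσ_def]
      dsimp only
      rw [← hadd, hcongr, hconst]
    rw [this, hσ_def]
    dsimp only
    ring
  have htail_lo : ∀ s, s ≤ 0 → σ s = σ 0 + ρ 0 * s := by
    intro s hs0
    have hadd : (∫ u in (0:ℝ)..s, ρ u) + (∫ u in (s:ℝ)..0, ρ u) = ∫ u in (0:ℝ)..(0:ℝ), ρ u :=
      intervalIntegral.integral_add_adjacent_intervals (hρcont.intervalIntegrable 0 s)
        (hρcont.intervalIntegrable s 0)
    have hzero : clamp (0:ℝ) = 0 := hclamp_id 0 (by norm_num)
    have hcongr : (∫ u in (s:ℝ)..0, ρ u) = ∫ u in (s:ℝ)..0, ρ 0 := by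
      apply intervalIntegral.integral_congr
      intro u hu
      rw [uIcc_of_le hs0] at hu
      have hcl : clamp u = 0 := by
        simp only [hclamp_def, max_eq_left hu.2, min_eq_right zero_le_one]
      simp only [hρ_def, hcl, hzero]
    have hconst : (∫ u in (s:ℝ)..0, ρ 0) = (0 - s) * ρ 0 := by
      rw [intervalIntegral.integral_const, smul_eq_mul]
    have h2 : (∫ u in (0:ℝ)..s, ρ u) = -((0 - s) * ρ 0) := by
      have h3 := hadd
      rw [hcongr, hconst, intervalIntegral.integral_same] at h3
      linarith
    rw [hσ_def]
    dsimp only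
    rw [h2, intervalIntegral.integral_same]
    ring
  have htop : Tendsto σ atTop atTop := by
    have h1 : Tendsto (fun s => σ 1 + ρ 1 * (s - 1)) atTop atTop := by
      apply tendsto_atTop_add_const_left
      exact Tendsto.const_mul_atTop (hρpos 1) (tendsto_atTop_add_const_right _ _ tendsto_id)
    refine h1.congr' ?_
    filter_upwards [eventually_ge_atTop 1] with s hs
    exact (htail_hi s hs).symm
  have hbot : Tendsto σ atBot atBot := by
    have h1 : Tendsto (fun s => σ 0 + ρ 0 * s) atBot atBot := by
      apply tendsto_atBot_add_const_left
      exact Tendsto.const_mul_atBot (hρpos 0) tendsto_id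
    refine h1.congr' ?_
    filter_upwards [eventually_le_atBot 0] with s hs
    exact (htail_lo s hs).symm
  have hσsurj : Function.Surjective σ := hσcont.surjective htop hbot
  set τiso := StrictMono.orderIsoOfSurjective σ hσmono hσsurj with hτiso_def
  set τ : ℝ → ℝ := fun t => τiso.symm t with hτ_def
  have hστ : ∀ t, σ (τ t) = t := fun t =>
    StrictMono.orderIsoOfSurjective_self_symm_apply σ hσmono hσsurj t
  have hτσ : ∀ s, τ (σ s) = s := fun s =>
    StrictMono.orderIsoOfSurjective_symm_apply_self σ hσmono hσsurj s
  have hτcont : Continuous τ := OrderIso.continuous τiso.symm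
  have hτmono : StrictMono τ := τiso.symm.strictMono
  have hτd : ∀ t, HasDerivAt τ (ρ (τ t))⁻¹ t := fun t =>
    HasDerivAt.of_local_left_inverse hτcont.continuousAt (hσd (τ t)) (hρpos (τ t)).ne'
      (Eventually.of_forall hστ)
  have hτm0 : τ (-ω) = 0 := by rw [← hσ0]; exact hτσ 0
  have hτm1 : τ ω = 1 := by rw [← hσ1]; exact hτσ 1
  have hτmaps : MapsTo τ (Icc (-ω) ω) (Icc (0:ℝ) 1) := by
    intro t ht
    constructor
    · rw [← hτm0]; exact hτmono.monotone ht.1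
    · rw [← hτm1]; exact hτmono.monotone ht.2
  have hτmapso : ∀ t ∈ Ioo (-ω) ω, τ t ∈ Ioo (0:ℝ) 1 := by
    intro t ht
    exact ⟨hτm0 ▸ hτmono ht.1, hτm1 ▸ hτmono ht.2⟩
  have hUJ : UniqueDiffOn ℝ (Icc (-ω) ω) := uniqueDiffOn_Icc (by linarith)
  set τd : ℝ → ℝ := fun t => Real.sqrt 2 * Wf (γ (τ t)) / c with hτd_def
  have hρτ : ∀ t ∈ Icc (-ω) ω, (ρ (τ t))⁻¹ = τd t := by
    intro t ht
    have hcl : clamp (τ t) = τ t := hclamp_id _ (hτmaps ht)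
    simp only [hρ_def, hτd_def, hcl, inv_div]
  have hτd' : ∀ t ∈ Icc (-ω) ω, HasDerivAt τ (τd t) t := fun t ht => (hρτ t ht) ▸ hτd t
  have hτdw : ∀ t ∈ Icc (-ω) ω, derivWithin τ (Icc (-ω) ω) t = τd t := fun t ht =>
    ((hτd' t ht).hasDerivWithinAt).derivWithin (hUJ t ht)
  have hτC1 : ContDiffOn ℝ 1 τ (Icc (-ω) ω) := by
    rw [show (1 : WithTop ℕ∞) = 0 + 1 from by norm_num, contDiffOn_succ_iff_derivWithin hUJ]
    refine ⟨fun t ht => (hτd t).differentiableAt.differentiableWithinAt,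
      fun h => absurd h (by simp), ?_⟩
    rw [contDiffOn_zero]
    have hτdcont : ContinuousOn τd (Icc (-ω) ω) := by
      have h1 : ContinuousOn (fun t => γ (τ t)) (Icc (-ω) ω) :=
        hC.continuousOn.comp hτcont.continuousOn hτmaps
      have h2 : ContinuousOn (fun t => Wf (γ (τ t))) (Icc (-ω) ω) := by
        have h3 : ContinuousOn (fun t => ‖γ (τ t)‖) (Icc (-ω) ω) := h1.norm
        exact (h3.inv₀ fun t ht => (hH _ (hτmaps ht)).1.ne').sub continuousOn_const
      exact (continuousOn_const.mul h2).div_const c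
    exact hτdcont.congr hτdw
  have hτdC1 : ContDiffOn ℝ 1 τd (Icc (-ω) ω) := by
    have hWfC1 : ContDiffOn ℝ 1 Wf {x : E2 | x ≠ 0} := fun x hx =>
      ((contDiffAt_Wf hx).of_le one_le_two).contDiffWithinAt
    have h1 : ContDiffOn ℝ 1 (fun t => γ (τ t)) (Icc (-ω) ω) :=
      (hC.of_le one_le_two).comp hτC1 hτmaps
    have h2 : ContDiffOn ℝ 1 (fun t => Wf (γ (τ t))) (Icc (-ω) ω) :=
      hWfC1.comp h1 (fun t ht => hγ0 _ (hτmaps ht))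
    exact (contDiffOn_const.mul h2).div_const c
  have hτC2 : ContDiffOn ℝ 2 τ (Icc (-ω) ω) := by
    rw [show (2 : WithTop ℕ∞) = 1 + 1 from by norm_num, contDiffOn_succ_iff_derivWithin hUJ]
    exact ⟨fun t ht => (hτd t).differentiableAt.differentiableWithinAt,
      fun h => absurd h (by simp), hτdC1.congr hτdw⟩
  have hxC2 : ContDiffOn ℝ 2 (γ ∘ τ) (Icc (-ω) ω) := hC.comp hτC2 hτmaps
  have hx0 : ∀ t ∈ Icc (-ω) ω, (γ ∘ τ) t ≠ 0 := fun t ht => hγ0 _ (hτmaps ht)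
  have hvel : ∀ t ∈ Icc (-ω) ω, vel ω (γ ∘ τ) t = τd t • v (τ t) := by
    intro t ht
    have h1 : HasDerivWithinAt (γ ∘ τ) (τd t • v (τ t)) (Icc (-ω) ω) t :=
      HasDerivWithinAt.scomp t (hvd _ (hτmaps ht)) ((hτd' t ht).hasDerivWithinAt) hτmaps
    exact h1.derivWithin (hUJ t ht)
  have hτdsq : ∀ t ∈ Icc (-ω) ω, τd t ^ 2 = 2 * Wf (γ (τ t))^2 / c2 := by
    intro t ht
    simp only [hτd_def]
    rw [div_pow, mul_pow, sq, hr2sq, hcc]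
  have henergy : ∀ t ∈ Icc (-ω) ω, (1/2) * ‖vel ω (γ ∘ τ) t‖ ^ 2 - ‖(γ ∘ τ) t‖⁻¹ = -1 := by
    intro t ht
    have hsI := hτmaps ht
    rw [hvel t ht]
    have h1 : ‖τd t • v (τ t)‖^2 = τd t ^2 * ‖v (τ t)‖^2 := by
      rw [norm_smul, mul_pow, Real.norm_eq_abs, sq_abs]
    have h3 : ‖(γ ∘ τ) t‖⁻¹ = Wf (γ (τ t)) + 1 := by
      simp [Wf, Function.comp_apply]
    rw [h1, h3, hvnorm _ hsI, hτdsq t ht]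
    have hW := hWpos _ hsI
    field_simp
    ring
  have hode : ∀ t ∈ Ioo (-ω) ω, derivWithin (vel ω (γ ∘ τ)) (Icc (-ω) ω) t
      = -(‖(γ ∘ τ) t‖ ^ 3)⁻¹ • (γ ∘ τ) t := by
    intro t ht
    have htI : t ∈ Icc (-ω) ω := Ioo_subset_Icc_self ht
    have hs_in : τ t ∈ Ioo (0:ℝ) 1 := hτmapso t ht
    have hsI : τ t ∈ Icc (0:ℝ) 1 := Ioo_subset_Icc_self hs_in
    have hIs : Icc (0:ℝ) 1 ∈ 𝓝 (τ t) := Icc_mem_nhds hs_in.1 hs_in.2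
    have hJt : Icc (-ω) ω ∈ 𝓝 t := Icc_mem_nhds ht.1 ht.2
    have hcongr : derivWithin (vel ω (γ ∘ τ)) (Icc (-ω) ω) t
        = derivWithin (fun u => τd u • v (τ u)) (Icc (-ω) ω) t :=
      derivWithin_congr hvel (hvel t htI)
    rw [hcongr, derivWithin_of_mem_nhds hJt]
    have hτat : HasDerivAt τ (τd t) t := hτd' t htI
    have hva : HasDerivAt v (a (τ t)) (τ t) := (had _ hsI).hasDerivAt hIs
    have hvτ : HasDerivAt (fun u => v (τ u)) (τd t • a (τ t)) t := hva.scomp t hτat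
    have hfs : HasDerivAt (fun u => Wf (γ u)) ⟪gradW (γ (τ t)), v (τ t)⟫ (τ t) :=
      (hfd _ hsI).hasDerivAt hIs
    have hfτ : HasDerivAt (fun u => Wf (γ (τ u))) (⟪gradW (γ (τ t)), v (τ t)⟫ * τd t) t :=
      hfs.comp t hτat
    have hτdAt : HasDerivAt τd (Real.sqrt 2 * (⟪gradW (γ (τ t)), v (τ t)⟫ * τd t) / c) t :=
      (hfτ.const_mul (Real.sqrt 2)).div_const c
    have hV : HasDerivAt (fun u => τd u • v (τ u))
        (τd t • (τd t • a (τ t))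
          + (Real.sqrt 2 * (⟪gradW (γ (τ t)), v (τ t)⟫ * τd t) / c) • v (τ t)) t :=
      hτdAt.smul hvτ
    rw [hV.deriv]
    have hW := hWpos _ hsI
    have key : τd t • (τd t • a (τ t))
        = (2 * Wf (γ (τ t)) / c2) • (Wf (γ (τ t)) • a (τ t)) := by
      rw [smul_smul, smul_smul]
      congr 1
      have h2 : τd t * τd t = 2 * Wf (γ (τ t))^2 / c2 := by
        rw [← sq]; exact hτdsq t htI
      rw [h2]
      field_simp
    have e1 : (2 * Wf (γ (τ t)) / c2) * (1/2 * ‖v (τ t)‖^2) = 1 := by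
      rw [hvnorm _ hsI]
      field_simp
    have e2 : Real.sqrt 2 * (⟪gradW (γ (τ t)), v (τ t)⟫ * τd t) / c
        = (2 * Wf (γ (τ t)) / c2) * ⟪gradW (γ (τ t)), v (τ t)⟫ := by
      simp only [hτd_def]
      generalize ⟪gradW (γ (τ t)), v (τ t)⟫ = ip
      have hccm : c * c = c2 := by rw [← sq]; exact hcc
      rw [show Real.sqrt 2 * (ip * (Real.sqrt 2 * Wf (γ (τ t)) / c)) / c
          = (Real.sqrt 2 * Real.sqrt 2) * (ip * Wf (γ (τ t))) / (c * c) from by ring,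
        hr2sq, hccm]
      ring
    rw [key, hmom _ hs_in, smul_sub, smul_smul, smul_smul, e1, e2, one_smul]
    have : ∀ G V : E2, ∀ k : ℝ, G - k • V + k • V = G := by
      intro G V k; abel
    exact this _ _ _
  refine ⟨ω, hω, τ, hτmono.strictMonoOn _, hτC2.of_le one_le_two, hτm0, hτm1,
    fun t ht => hτmaps ht, hω, hxC2, hx0, hode, henergy⟩
end
end

section
/- Let f∈ℝ² with |f|<1, let p∈E(f), and let p_f be the antipodal point of p. Let (f_n) be a sequence in ℝ² with |f_n|<1, f_n≠f and p∈E(f_n) for every n, and f_n→f as n→∞. Then for every n the set E(f)∩E(f_n) consists of exactly two points, namely p and a point p_n≠p, and p_n→p_f as n→∞. -/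
noncomputable section
open Set Real Filter
open scoped RealInnerProductSpace

/-- The ellipse with foci 0 and f and major axis of length 1. -/
def ellipseF (f : E2) : Set E2 := {x | ‖x - 0‖ + ‖x - f‖ = 1}

/-- pf is the antipodal point of p on the ellipse E(f): the point of E(f) distinct from p
lying on the straight line through p and f. -/
def IsAntipodal (f p pf : E2) : Prop :=
  pf ∈ ellipseF f ∧ pf ≠ p ∧ Collinear ℝ ({p, f, pf} : Set E2)

/-! ### Auxiliary: rotation by 90 degrees -/

def rot (x : E2) : E2 := pt (-(x 1)) (x 0)

lemma inner_E2 (x y : E2) : ⟪x, y⟫ = x 0 * y 0 + x 1 * y 1 := by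
  simp [PiLp.inner_apply, Fin.sum_univ_two]; ring

@[simp] lemma rot0 (x : E2) : rot x 0 = -(x 1) := by simp [rot, pt]
@[simp] lemma rot1 (x : E2) : rot x 1 = x 0 := by simp [rot, pt]

lemma inner_rot_self (x : E2) : ⟪rot x, x⟫ = 0 := by
  simp [inner_E2]; ring

lemma inner_rot_rot (x y : E2) : ⟪rot x, rot y⟫ = ⟪x, y⟫ := by
  simp [inner_E2]; ring

lemma norm_rot (x : E2) : ‖rot x‖ = ‖x‖ := by
  have h1 := real_inner_self_eq_norm_sq (rot x)
  have h2 := real_inner_self_eq_norm_sq x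
  rw [inner_rot_rot] at h1
  nlinarith [norm_nonneg x, norm_nonneg (rot x)]

lemma rot_ne_zero {x : E2} (hx : x ≠ 0) : rot x ≠ 0 := by
  intro h
  apply hx
  have h0 : rot x 0 = 0 := by rw [h]; rfl
  have h1 : rot x 1 = 0 := by rw [h]; rfl
  simp only [rot0, rot1, neg_eq_zero] at h0 h1
  ext i
  fin_cases i <;> simp [h0, h1]

lemma rot_smul (r : ℝ) (x : E2) : rot (r • x) = r • rot x := by
  ext i
  fin_cases i <;> simp [PiLp.smul_apply, smul_eq_mul] <;> ring

lemma exists_smul_rot (w : E2) (hw : w ≠ 0) (x : E2) (h : ⟪x, w⟫ = 0) :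
    ∃ t : ℝ, x = t • rot w := by
  have hw2 : w 0 ^ 2 + w 1 ^ 2 ≠ 0 := by
    intro hc
    apply hw
    have h0 : w 0 = 0 := by nlinarith [sq_nonneg (w 0), sq_nonneg (w 1)]
    have h1 : w 1 = 0 := by nlinarith [sq_nonneg (w 0), sq_nonneg (w 1)]
    ext i; fin_cases i <;> simpa
  refine ⟨(x 1 * w 0 - x 0 * w 1) / (w 0 ^ 2 + w 1 ^ 2), ?_⟩
  rw [inner_E2] at h
  ext i
  fin_cases i <;>
  · simp only [Fin.zero_eta, Fin.mk_one, PiLp.smul_apply, smul_eq_mul, rot0, rot1]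
    field_simp
    first | linear_combination (w 0) * h | linear_combination (w 1) * h

lemma onb_expand {e : E2} (he : ‖e‖ = 1) (x : E2) :
    x = ⟪x, e⟫ • e + ⟪x, rot e⟫ • rot e := by
  have h2 : e 0 ^ 2 + e 1 ^ 2 = 1 := by
    have := real_inner_self_eq_norm_sq e
    rw [inner_E2, he] at this
    nlinarith [this]
  have c0 : x 0 = (⟪x, e⟫ • e + ⟪x, rot e⟫ • rot e) 0 := by
    simp only [PiLp.add_apply, PiLp.smul_apply, smul_eq_mul, rot0, rot1, inner_E2]
    linear_combination (-(x 0)) * h2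
  have c1 : x 1 = (⟪x, e⟫ • e + ⟪x, rot e⟫ • rot e) 1 := by
    simp only [PiLp.add_apply, PiLp.smul_apply, smul_eq_mul, rot0, rot1, inner_E2]
    linear_combination (-(x 1)) * h2
  ext i
  fin_cases i
  · exact c0
  · exact c1

lemma sq_norm_expand {e : E2} (he : ‖e‖ = 1) (x : E2) :
    ‖x‖^2 = ⟪x, e⟫^2 + ⟪x, rot e⟫^2 := by
  rw [← real_inner_self_eq_norm_sq]
  conv_lhs => rw [onb_expand he x]
  have h1 : ⟪e, e⟫ = (1:ℝ) := by rw [real_inner_self_eq_norm_sq, he]; norm_num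
  have h2 : ⟪rot e, rot e⟫ = (1:ℝ) := by rw [inner_rot_rot]; exact h1
  have h3 : ⟪e, rot e⟫ = (0:ℝ) := by rw [real_inner_comm]; exact inner_rot_self e
  have h4 : ⟪rot e, e⟫ = (0:ℝ) := inner_rot_self e
  simp only [inner_add_left, inner_smul_left, inner_add_right, inner_smul_right,
    conj_trivial, h1, h2, h3, h4]
  ring

/-! ### Ellipse membership characterizations -/

lemma mem_linear {f : E2} (hf : ‖f‖ < 1) (x : E2) :
    x ∈ ellipseF f ↔ ‖x‖ = (1 - ‖f‖^2)/2 + ⟪x, f⟫ := by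
  have hxf : ‖x - f‖^2 = ‖x‖^2 - 2*⟪x,f⟫ + ‖f‖^2 := by
    exact norm_sub_sq_real x f
  constructor
  · intro h
    simp only [ellipseF, mem_setOf_eq, sub_zero] at h
    have h1 : ‖x - f‖ = 1 - ‖x‖ := by linarith
    have h2 : ‖x - f‖^2 = (1 - ‖x‖)^2 := by rw [h1]
    nlinarith [hxf]
  · intro h
    have hcs : ⟪x, f⟫ ≤ ‖x‖ * ‖f‖ := real_inner_le_norm x f
    have hx1 : ‖x‖ ≤ (1 + ‖f‖)/2 := by nlinarith [norm_nonneg x, norm_nonneg f]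
    have h2 : ‖x - f‖^2 = (1 - ‖x‖)^2 := by rw [hxf]; nlinarith
    have h3 : ‖x - f‖ = 1 - ‖x‖ := by
      nlinarith [norm_nonneg (x - f), norm_nonneg x]
    simp only [ellipseF, mem_setOf_eq, sub_zero]
    linarith

lemma mem_sq {f : E2} (hf : ‖f‖ < 1) (x : E2) :
    x ∈ ellipseF f ↔ ‖x‖^2 = ((1 - ‖f‖^2)/2 + ⟪x, f⟫)^2 := by
  rw [mem_linear hf]
  constructor
  · intro h; rw [← h]
  · intro h
    rcases le_or_gt 0 ((1 - ‖f‖^2)/2 + ⟪x, f⟫) with hge | hlt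
    · nlinarith [norm_nonneg x]
    · exfalso
      have hx : ‖x‖ = -((1 - ‖f‖^2)/2 + ⟪x, f⟫) := by
        nlinarith [norm_nonneg x]
      have hxf : ‖x - f‖^2 = ‖x‖^2 - 2*⟪x,f⟫ + ‖f‖^2 := by
        exact norm_sub_sq_real x f
      have h2 : ‖x - f‖^2 = (‖x‖ + 1)^2 := by rw [hxf]; nlinarith
      have h3 : ‖x - f‖ = ‖x‖ + 1 := by
        nlinarith [norm_nonneg (x - f), norm_nonneg x]
      have h4 : ‖x - f‖ ≤ ‖x‖ + ‖f‖ := norm_sub_le x f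
      linarith

lemma norm_pos_lt {f p : E2} (hf : ‖f‖ < 1) (hp : p ∈ ellipseF f) :
    0 < ‖p‖ ∧ ‖p‖ < 1 := by
  rw [mem_linear hf] at hp
  have hcs : ⟪p, f⟫ ≤ ‖p‖ * ‖f‖ := real_inner_le_norm p f
  have hcs2 : -(‖p‖ * ‖f‖) ≤ ⟪p, f⟫ := neg_le_of_abs_le (abs_real_inner_le_norm p f)
  have h0 : 0 ≤ ‖f‖ := norm_nonneg f
  constructor <;> nlinarith [norm_nonneg p]

lemma quad_line {f p : E2} (hf : ‖f‖ < 1) (hp : p ∈ ellipseF f) (d : E2) (t : ℝ) :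
    p + t • d ∈ ellipseF f ↔
      t * (t * (‖d‖^2 - ⟪d, f⟫^2) + 2 * ⟪d, p - ‖p‖ • f⟫) = 0 := by
  rw [mem_sq hf]
  have hl : ‖p‖ = (1 - ‖f‖^2)/2 + ⟪p, f⟫ := (mem_linear hf p).1 hp
  have e1 : ‖p + t • d‖^2 = ‖p‖^2 + 2*t*⟪p,d⟫ + t^2*‖d‖^2 := by
    rw [norm_add_sq_real, norm_smul, real_inner_smul_right, mul_pow, Real.norm_eq_abs, sq_abs]
    ring
  have e2 : ⟪p + t • d, f⟫ = ⟪p, f⟫ + t * ⟪d, f⟫ := by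
    simp [inner_add_left, inner_smul_left]
  have e3 : ⟪d, p - ‖p‖ • f⟫ = ⟪p, d⟫ - ‖p‖ * ⟪d, f⟫ := by
    rw [inner_sub_right, inner_smul_right, real_inner_comm d p]
  rw [e1, e2, e3]
  constructor
  · intro h
    linear_combination h - (‖p‖ + (1 - ‖f‖^2)/2 + ⟪p,f⟫ + 2*t*⟪d,f⟫) * hl
  · intro h
    linear_combination h + (‖p‖ + (1 - ‖f‖^2)/2 + ⟪p,f⟫ + 2*t*⟪d,f⟫) * hl

lemma nontangent {f fn p : E2} (hf : ‖f‖ < 1) (hfn : ‖fn‖ < 1) (hne : fn ≠ f)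
    (hp : p ∈ ellipseF f) (hpn : p ∈ ellipseF fn) {d : E2} (hd : d ≠ 0)
    (hperp : ⟪d, fn - f⟫ = 0) (h0 : ⟪d, p - ‖p‖ • f⟫ = 0) : False := by
  obtain ⟨ha0, ha1⟩ := norm_pos_lt hf hp
  have hune : p - ‖p‖ • f ≠ 0 := by
    intro hc
    have hpaf : p = ‖p‖ • f := by rwa [sub_eq_zero] at hc
    have h5 : ‖p‖ = |‖p‖| * ‖f‖ := by
      conv_lhs => rw [hpaf]
      rw [norm_smul, Real.norm_eq_abs]
    rw [abs_of_pos ha0] at h5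
    nlinarith
  obtain ⟨s, hs⟩ := exists_smul_rot d hd _ (by rw [real_inner_comm]; exact h0)
  obtain ⟨s', hs'⟩ := exists_smul_rot d hd (fn - f) (by rw [real_inner_comm]; exact hperp)
  have hsne : s ≠ 0 := by rintro rfl; simp at hs; exact hune hs
  have hfneq : fn = f + (s'/s) • (p - ‖p‖ • f) := by
    rw [hs, smul_smul, div_mul_cancel₀ _ hsne, ← hs']
    abel
  set t' : ℝ := s'/s with ht'
  have ht'ne : t' ≠ 0 := by
    rintro h
    rw [h, zero_smul, add_zero] at hfneq
    exact hne hfneq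
  have hl : ‖p‖ = (1 - ‖f‖^2)/2 + ⟪p,f⟫ := (mem_linear hf p).1 hp
  have hln : ‖p‖ = (1 - ‖fn‖^2)/2 + ⟪p,fn⟫ := (mem_linear hfn p).1 hpn
  have e3 : ⟪p, fn⟫ = ⟪p,f⟫ + t' * (‖p‖^2 - ‖p‖*⟪p,f⟫) := by
    rw [hfneq]
    simp only [inner_add_right, inner_smul_right, inner_sub_right,
      real_inner_self_eq_norm_sq]
    try ring
  have e4 : ‖fn‖^2 = ‖f‖^2 + 2*t'*(⟪p,f⟫ - ‖p‖*‖f‖^2)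
      + t'^2*(‖p‖^2 - 2*‖p‖*⟪p,f⟫ + ‖p‖^2*‖f‖^2) := by
    rw [← real_inner_self_eq_norm_sq fn]
    conv_lhs => rw [hfneq]
    simp only [inner_add_left, inner_add_right, inner_smul_left, inner_smul_right,
      inner_sub_left, inner_sub_right, real_inner_self_eq_norm_sq,
      real_inner_comm f p, smul_eq_mul, conj_trivial]
    ring
  have hk : ‖f‖^2 < 1 := by nlinarith [norm_nonneg f]
  have hkn : ‖fn‖^2 < 1 := by nlinarith [norm_nonneg fn]
  have key0 : t' * ((1-‖f‖^2)*(1-‖p‖)*(1 - t'*‖p‖)) = 0 := by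
    linear_combination (2 + 2*‖p‖*t'^2 - 2*t'*(‖p‖+1)) * hl - 2*hln - 2*e3 + e4
  have key2 : t' * ‖p‖ = 1 := by
    have h1k : (0:ℝ) < 1 - ‖f‖^2 := by linarith
    have h1a : (0:ℝ) < 1 - ‖p‖ := by linarith
    rcases mul_eq_zero.mp key0 with h | h
    · exact absurd h ht'ne
    · rcases mul_eq_zero.mp h with h' | h'
      · nlinarith
      · linarith
  have hkn1 : ‖fn‖^2 = ‖f‖^2 + 2*t'*(‖p‖^2 - ‖p‖*⟪p,f⟫) := by
    linear_combination 2*hln - 2*hl + 2*e3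
  have : ‖fn‖^2 = 1 := by
    linear_combination hkn1 + 2*(‖p‖ - ⟪p,f⟫)*key2 + 2*hl
  linarith

/-! ### The second intersection point -/

/-- Second intersection of the line through p with direction d with the ellipse. -/
def spt (f p d : E2) : E2 :=
  p + (-(2 * ⟪d, p - ‖p‖ • f⟫) / (‖d‖^2 - ⟪d, f⟫^2)) • d

lemma spt_scalar_aux (B A r : ℝ) (hr : r ≠ 0) (hA : A ≠ 0) :
    -(2*(r*B))/(r^2*A)*r = -(2*B)/A := by
  field_simp

lemma spt_smul (f p d : E2) {r : ℝ} (hr : r ≠ 0) : spt f p (r • d) = spt f p d := by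
  unfold spt
  congr 1
  rw [smul_smul]
  congr 1
  rw [inner_smul_left, inner_smul_left, norm_smul, Real.norm_eq_abs]
  simp only [conj_trivial]
  have hden : (|r| * ‖d‖)^2 - (r * ⟪d,f⟫)^2 = r^2 * (‖d‖^2 - ⟪d,f⟫^2) := by
    rw [mul_pow, mul_pow, sq_abs]; ring
  rw [hden]
  rcases eq_or_ne (‖d‖^2 - ⟪d, f⟫^2) 0 with h | h
  · rw [h, mul_zero, div_zero, div_zero, zero_mul]
  · exact spt_scalar_aux _ _ _ hr h

lemma intersection {f fn p : E2} (hf : ‖f‖ < 1) (hfn : ‖fn‖ < 1) (hne : fn ≠ f)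
    (hp : p ∈ ellipseF f) (hpn : p ∈ ellipseF fn) :
    spt f p (rot (fn - f)) ≠ p ∧
      ellipseF f ∩ ellipseF fn = {p, spt f p (rot (fn - f))} := by
  set d : E2 := rot (fn - f) with hd
  have hwne : fn - f ≠ 0 := sub_ne_zero.mpr hne
  have hdne : d ≠ 0 := rot_ne_zero hwne
  have hperp : ⟪d, fn - f⟫ = 0 := inner_rot_self _
  have hdpos : 0 < ‖d‖ := norm_pos_iff.mpr hdne
  have hA : 0 < ‖d‖^2 - ⟪d, f⟫^2 := by
    have hcs := real_inner_mul_inner_self_le d f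
    rw [real_inner_self_eq_norm_sq, real_inner_self_eq_norm_sq] at hcs
    have h1 : (0:ℝ) < 1 - ‖f‖^2 := by nlinarith [norm_nonneg f]
    nlinarith [hcs, mul_pos (pow_pos hdpos 2) h1]
  have hB : ⟪d, p - ‖p‖ • f⟫ ≠ 0 := fun h => nontangent hf hfn hne hp hpn hdne hperp h
  set t₂ : ℝ := -(2 * ⟪d, p - ‖p‖ • f⟫) / (‖d‖^2 - ⟪d, f⟫^2) with ht₂
  have ht₂ne : t₂ ≠ 0 := by
    apply div_ne_zero _ (ne_of_gt hA)
    simpa using hB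
  have hspt : spt f p d = p + t₂ • d := rfl
  have ht2A : t₂ * (‖d‖^2 - ⟪d, f⟫^2) = -(2 * ⟪d, p - ‖p‖ • f⟫) := by
    rw [ht₂, div_mul_cancel₀ _ (ne_of_gt hA)]
  have hroot : t₂ * (‖d‖^2 - ⟪d, f⟫^2) + 2 * ⟪d, p - ‖p‖ • f⟫ = 0 := by
    rw [ht2A]; ring
  have hqne : spt f p d ≠ p := by
    rw [hspt]
    intro h
    have : t₂ • d = 0 := add_eq_left.mp h
    rcases smul_eq_zero.mp this with h' | h'
    · exact ht₂ne h'
    · exact hdne h'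
  have hl : ‖p‖ = (1 - ‖f‖^2)/2 + ⟪p,f⟫ := (mem_linear hf p).1 hp
  have hln : ‖p‖ = (1 - ‖fn‖^2)/2 + ⟪p,fn⟫ := (mem_linear hfn p).1 hpn
  -- spt ∈ ellipseF f
  have hq1 : spt f p d ∈ ellipseF f := by
    rw [hspt, quad_line hf hp]
    rw [hroot, mul_zero]
  -- spt ∈ ellipseF fn
  have hq2 : spt f p d ∈ ellipseF fn := by
    rw [mem_linear hfn]
    have h1 : ‖spt f p d‖ = (1 - ‖f‖^2)/2 + ⟪spt f p d, f⟫ := (mem_linear hf _).1 hq1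
    have h2 : ⟪spt f p d, fn - f⟫ = ⟪p, fn - f⟫ := by
      rw [hspt, inner_add_left, inner_smul_left]
      simp [hperp]
    have h3 : ⟪spt f p d, fn⟫ - ⟪spt f p d, f⟫ = ⟪p, fn⟫ - ⟪p, f⟫ := by
      have := h2
      rw [inner_sub_right, inner_sub_right] at this
      linarith
    rw [h1]
    linarith
  constructor
  · exact hqne
  · ext x
    constructor
    · rintro ⟨hx1, hx2⟩
      have hxl : ‖x‖ = (1 - ‖f‖^2)/2 + ⟪x,f⟫ := (mem_linear hf x).1 hx1
      have hxln : ‖x‖ = (1 - ‖fn‖^2)/2 + ⟪x,fn⟫ := (mem_linear hfn x).1 hx2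
      have hxp : ⟪x - p, fn - f⟫ = 0 := by
        rw [inner_sub_left, inner_sub_right, inner_sub_right]
        linarith
      obtain ⟨t, ht⟩ := exists_smul_rot (fn - f) hwne (x - p) hxp
      have hxe : x = p + t • d := by rw [← hd] at ht; rw [← ht]; abel
      have hq := (quad_line hf hp d t).1 (hxe ▸ hx1)
      rcases mul_eq_zero.mp hq with h' | h'
      · left; rw [hxe, h', zero_smul, add_zero]
      · right
        have htt : t * (‖d‖^2 - ⟪d, f⟫^2) = t₂ * (‖d‖^2 - ⟪d, f⟫^2) := by
          rw [ht2A]; linarith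
        have : t = t₂ := mul_right_cancel₀ (ne_of_gt hA) htt
        rw [hxe, this, hspt]
        rfl
    · rintro (rfl | rfl)
      · exact ⟨hp, hpn⟩
      · exact ⟨hq1, hq2⟩

lemma scal_aux (W R : ℝ) (hW : W ≠ 0) (hR : R ≠ 0) :
    W⁻¹ * (R⁻¹ * -(W^2/2)) = -(W/(2*R)) := by
  field_simp

set_option maxHeartbeats 2000000 in
/-- Proposition prop_antipodali: if ellipses Eₙ (with focus 0, major axis 1, passing
through p, second focus fₙ → f, fₙ ≠ f) approach the ellipse E(f), then E(f) ∩ E(fₙ)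
consists of p and a unique second point pₙ, with pₙ → p_f, the antipodal point of p. -/
theorem antipodal_limit (f p pf : E2) (hf : ‖f‖ < 1) (hp : p ∈ ellipseF f)
    (hpf : IsAntipodal f p pf)
    (fn : ℕ → E2) (hfn1 : ∀ n, ‖fn n‖ < 1) (hfn2 : ∀ n, fn n ≠ f)
    (hfn3 : ∀ n, p ∈ ellipseF (fn n)) (hfn4 : Tendsto fn atTop (nhds f)) :
    ∃ pn : ℕ → E2,
      (∀ n, pn n ≠ p ∧ ellipseF f ∩ ellipseF (fn n) = {p, pn n}) ∧
      Tendsto pn atTop (nhds pf) := by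
  obtain ⟨hpfE, hpfne, hcol⟩ := hpf
  obtain ⟨ha0, ha1⟩ := norm_pos_lt hf hp
  have hpne_f : p ≠ f := by
    intro h
    have h2 := hp
    simp only [ellipseF, mem_setOf_eq, sub_zero, h, sub_self, norm_zero, add_zero] at h2
    rw [h] at ha1
    exact absurd h2 (ne_of_lt ha1)
  have hfpne : f - p ≠ 0 := sub_ne_zero.mpr (Ne.symm hpne_f)
  obtain ⟨r, hrdef⟩ : ∃ r : ℝ, r = ‖f - p‖ := ⟨_, rfl⟩
  have hrpos : 0 < r := hrdef ▸ norm_pos_iff.mpr hfpne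
  obtain ⟨e₁, he₁def⟩ : ∃ e : E2, e = r⁻¹ • (f - p) := ⟨_, rfl⟩
  have he₁ : ‖e₁‖ = 1 := by
    rw [he₁def, norm_smul, Real.norm_eq_abs, abs_of_pos (inv_pos.mpr hrpos), ← hrdef]
    field_simp
  have hfp_e₁ : f - p = r • e₁ := by
    rw [he₁def, smul_smul, mul_inv_cancel₀ (ne_of_gt hrpos), one_smul]
  obtain ⟨u, hudef⟩ : ∃ u : E2, u = p - ‖p‖ • f := ⟨_, rfl⟩
  obtain ⟨u₁, hu₁def⟩ : ∃ a : ℝ, a = ⟪e₁, u⟫ := ⟨_, rfl⟩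
  obtain ⟨u₂, hu₂def⟩ : ∃ a : ℝ, a = ⟪rot e₁, u⟫ := ⟨_, rfl⟩
  obtain ⟨F₁, hF₁def⟩ : ∃ a : ℝ, a = ⟪e₁, f⟫ := ⟨_, rfl⟩
  obtain ⟨F₂, hF₂def⟩ : ∃ a : ℝ, a = ⟪rot e₁, f⟫ := ⟨_, rfl⟩
  have hD₁ : 0 < 1 - F₁^2 := by
    have hcs := real_inner_mul_inner_self_le e₁ f
    rw [real_inner_self_eq_norm_sq, real_inner_self_eq_norm_sq, he₁] at hcs
    have h1 : (0:ℝ) < 1 - ‖f‖^2 := by nlinarith [norm_nonneg f]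
    rw [hF₁def]
    nlinarith [hcs]
  obtain ⟨T, hTdef⟩ : ∃ a : ℝ, a = -(2 * u₁) / (1 - F₁^2) := ⟨_, rfl⟩
  -- pf = p + T • e₁
  have hpfT : pf = p + T • e₁ := by
    obtain ⟨v, hv⟩ := (collinear_iff_of_mem (Set.mem_insert p {f, pf})).mp hcol
    obtain ⟨tf, htf⟩ := hv f (by simp)
    obtain ⟨tp, htp⟩ := hv pf (by simp)
    have htfne : tf ≠ 0 := by
      rintro rfl
      rw [zero_smul] at htf
      exact hpne_f (by simp [htf])
    have hvfp : tf • v = f - p := by rw [htf]; simp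
    have hpf_eq : pf = p + ((tp/tf) * r) • e₁ := by
      rw [htp]
      have hh : tp • v = ((tp/tf) * r) • e₁ := by
        rw [mul_smul, ← hfp_e₁, ← hvfp, smul_smul]
        congr 1
        field_simp
      rw [← hh]
      simp [add_comm]
    obtain ⟨τ, hτdef⟩ : ∃ a : ℝ, a = (tp/tf) * r := ⟨_, rfl⟩
    rw [← hτdef] at hpf_eq
    have hτne : τ ≠ 0 := by
      rintro h
      rw [h, zero_smul, add_zero] at hpf_eq
      exact hpfne hpf_eq
    have hq := (quad_line hf hp e₁ τ).1 (by rw [← hpf_eq]; exact hpfE)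
    rw [he₁] at hq
    rcases mul_eq_zero.mp hq with h' | h'
    · exact absurd h' hτne
    · have hτT : τ = T := by
        rw [hTdef, eq_div_iff (ne_of_gt hD₁)]
        rw [← hudef, ← hu₁def, ← hF₁def, one_pow] at h'
        linarith
      rw [hpf_eq, hτT]
  -- the sequence
  refine ⟨fun n => spt f p (rot (fn n - f)), fun n =>
    ⟨(intersection hf (hfn1 n) (hfn2 n) hp (hfn3 n)).1,
     (intersection hf (hfn1 n) (hfn2 n) hp (hfn3 n)).2⟩, ?_⟩
  -- convergence
  obtain ⟨w, hwdef⟩ : ∃ w : ℕ → E2, w = fun n => fn n - f := ⟨_, rfl⟩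
  have hwn : ∀ n, w n = fn n - f := fun n => by rw [hwdef]
  have hwne : ∀ n, w n ≠ 0 := fun n => (hwn n) ▸ sub_ne_zero.mpr (hfn2 n)
  have hwnne : ∀ n, ‖w n‖ ≠ 0 := fun n => norm_ne_zero_iff.mpr (hwne n)
  obtain ⟨dh, hdhdef⟩ : ∃ d : ℕ → E2, d = fun n => ‖w n‖⁻¹ • rot (w n) := ⟨_, rfl⟩
  have hdhn : ∀ n, dh n = ‖w n‖⁻¹ • rot (w n) := fun n => by rw [hdhdef]
  have hspt_eq : ∀ n, spt f p (rot (fn n - f)) = spt f p (dh n) := by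
    intro n
    have hh : rot (fn n - f) = ‖w n‖ • dh n := by
      rw [hdhn, smul_smul, mul_inv_cancel₀ (hwnne n), one_smul, hwn]
    rw [hh, spt_smul f p (dh n) (hwnne n)]
  have hdh_unit : ∀ n, ‖dh n‖ = 1 := by
    intro n
    rw [hdhn, norm_smul, norm_rot, Real.norm_eq_abs, abs_inv,
      abs_of_nonneg (norm_nonneg (w n))]
    exact inv_mul_cancel₀ (hwnne n)
  obtain ⟨α, hαdef⟩ : ∃ a : ℕ → ℝ, a = fun n => ⟪dh n, e₁⟫ := ⟨_, rfl⟩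
  obtain ⟨β, hβdef⟩ : ∃ a : ℕ → ℝ, a = fun n => ⟪dh n, rot e₁⟫ := ⟨_, rfl⟩
  have hαn : ∀ n, α n = ⟪dh n, e₁⟫ := fun n => by rw [hαdef]
  have hβn : ∀ n, β n = ⟪dh n, rot e₁⟫ := fun n => by rw [hβdef]
  have hab : ∀ n, α n^2 + β n^2 = 1 := by
    intro n
    have h := sq_norm_expand he₁ (dh n)
    rw [hdh_unit n, one_pow, ← hαn n, ← hβn n] at h
    linarith
  have hβval : ∀ n, β n = -(‖w n‖/(2*r)) := by
    intro n
    have hip : ⟪w n, f - p⟫ = -(‖w n‖^2/2) := by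
      have hfoc : ‖p - fn n‖ = ‖p - f‖ := by
        have h1 := hp
        have h2 := hfn3 n
        simp only [ellipseF, mem_setOf_eq, sub_zero] at h1 h2
        linarith
      have hsq : ‖p - fn n‖^2 = ‖p - f‖^2 := by rw [hfoc]
      have E1 : ‖p - fn n‖^2 = ‖p‖^2 - 2*⟪p, fn n⟫ + ‖fn n‖^2 :=
        norm_sub_sq_real p (fn n)
      have E2 : ‖p - f‖^2 = ‖p‖^2 - 2*⟪p, f⟫ + ‖f‖^2 := norm_sub_sq_real p f
      have E3 : ‖w n‖^2 = ‖fn n‖^2 - 2*⟪fn n, f⟫ + ‖f‖^2 := by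
        rw [hwn n]; exact norm_sub_sq_real (fn n) f
      have E4 : ⟪w n, f - p⟫ = ⟪fn n, f⟫ - ⟪fn n, p⟫ - ‖f‖^2 + ⟪f, p⟫ := by
        rw [hwn n]
        simp only [inner_sub_left, inner_sub_right, real_inner_self_eq_norm_sq]
        ring
      have hc1 : ⟪fn n, p⟫ = ⟪p, fn n⟫ := real_inner_comm _ _
      have hc2 : ⟪f, p⟫ = ⟪p, f⟫ := real_inner_comm _ _
      linear_combination E4 + (hsq - E1 + E2 + E3)/2 - hc1 + hc2
    rw [hβn n, hdhn n, ← rot_smul, inner_rot_rot, he₁def, real_inner_smul_left,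
      real_inner_smul_right, hip]
    exact scal_aux _ _ (hwnne n) (ne_of_gt hrpos)
  have hwn0 : Tendsto (fun n => ‖w n‖) atTop (nhds 0) := by
    have h1 : Tendsto (fun n => fn n - f) atTop (nhds 0) := by
      simpa using hfn4.sub (tendsto_const_nhds (x := f))
    rw [hwdef]
    simpa using h1.norm
  have hβ0 : Tendsto β atTop (nhds 0) := by
    have h2 : Tendsto (fun n => -(‖w n‖/(2*r))) atTop (nhds (-(0/(2*r)))) :=
      (hwn0.div_const (2*r)).neg
    simp only [zero_div, neg_zero] at h2
    exact Tendsto.congr (fun n => (hβval n).symm) h2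
  have hβ2 : Tendsto (fun n => β n^2) atTop (nhds 0) := by
    have := hβ0.mul hβ0
    simpa [sq] using this
  have hαβ : Tendsto (fun n => α n * β n) atTop (nhds 0) := by
    have hblim : Tendsto (fun n => |β n|) atTop (nhds 0) := by simpa using hβ0.abs
    refine squeeze_zero_norm (fun n => ?_) hblim
    have h1 : α n^2 ≤ 1 := by nlinarith [hab n, sq_nonneg (β n)]
    have h2 : |α n| ≤ 1 := by
      rw [← Real.sqrt_one, show |α n| = Real.sqrt (α n^2) by rw [Real.sqrt_sq_eq_abs]]
      exact Real.sqrt_le_sqrt (by linarith)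
    rw [Real.norm_eq_abs, abs_mul]
    nlinarith [abs_nonneg (β n), abs_nonneg (α n)]
  -- the explicit formula
  obtain ⟨G, hGdef⟩ : ∃ G : ℝ × ℝ → E2, G = fun q =>
      p + ((-(2*((1-q.1)*u₁ + q.2*u₂)))/(1 - ((1-q.1)*F₁^2 + 2*q.2*F₁*F₂ + q.1*F₂^2))) • e₁
        + ((-(2*(q.2*u₁ + q.1*u₂)))/(1 - ((1-q.1)*F₁^2 + 2*q.2*F₁*F₂ + q.1*F₂^2))) • rot e₁ :=
    ⟨_, rfl⟩
  have hGq : ∀ s t : ℝ, G (s, t) =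
      p + ((-(2*((1-s)*u₁ + t*u₂)))/(1 - ((1-s)*F₁^2 + 2*t*F₁*F₂ + s*F₂^2))) • e₁
        + ((-(2*(t*u₁ + s*u₂)))/(1 - ((1-s)*F₁^2 + 2*t*F₁*F₂ + s*F₂^2))) • rot e₁ := by
    intro s t
    rw [hGdef]
  have hkey : ∀ n, spt f p (dh n) = G (β n^2, α n * β n) := by
    intro n
    have hexp : dh n = α n • e₁ + β n • rot e₁ := by
      rw [hαn n, hβn n]
      exact onb_expand he₁ (dh n)
    have hiu : ⟪dh n, u⟫ = α n * u₁ + β n * u₂ := by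
      conv_lhs => rw [hexp]
      rw [inner_add_left, real_inner_smul_left, real_inner_smul_left,
        ← hu₁def, ← hu₂def]
    have hif : ⟪dh n, f⟫ = α n * F₁ + β n * F₂ := by
      conv_lhs => rw [hexp]
      rw [inner_add_left, real_inner_smul_left, real_inner_smul_left,
        ← hF₁def, ← hF₂def]
    have hn2 : ‖dh n‖^2 = 1 := by rw [hdh_unit n]; norm_num
    have habn := hab n
    rw [hGq]
    rw [spt, hn2, ← hudef, hiu, hif]
    conv_lhs => rw [hexp]
    rw [smul_add, smul_smul, smul_smul]
    have hDeq : 1 - (α n * F₁ + β n * F₂)^2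
        = 1 - ((1 - β n^2)*F₁^2 + 2*(α n * β n)*F₁*F₂ + β n^2*F₂^2) := by
      linear_combination (-(F₁^2)) * habn
    have hs1 : -(2 * (α n * u₁ + β n * u₂)) / (1 - (α n * F₁ + β n * F₂)^2) * α n
        = -(2*((1 - β n^2)*u₁ + (α n * β n)*u₂))
          / (1 - ((1 - β n^2)*F₁^2 + 2*(α n * β n)*F₁*F₂ + β n^2*F₂^2)) := by
      rw [← hDeq, div_mul_eq_mul_div]
      congr 1
      linear_combination (-(2*u₁)) * habn
    have hs2 : -(2 * (α n * u₁ + β n * u₂)) / (1 - (α n * F₁ + β n * F₂)^2) * β n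
        = -(2*((α n * β n)*u₁ + β n^2*u₂))
          / (1 - ((1 - β n^2)*F₁^2 + 2*(α n * β n)*F₁*F₂ + β n^2*F₂^2)) := by
      rw [← hDeq, div_mul_eq_mul_div]
      congr 1
      ring
    rw [hs1, hs2]
    abel
  have hGcont : ContinuousAt G (0, 0) := by
    have hdenne : (1 : ℝ) - ((1-(0:ℝ))*F₁^2 + 2*(0:ℝ)*F₁*F₂ + (0:ℝ)*F₂^2) ≠ 0 := by
      norm_num
      nlinarith [hD₁]
    have hden : ContinuousAt (fun q : ℝ × ℝ =>
        1 - ((1-q.1)*F₁^2 + 2*q.2*F₁*F₂ + q.1*F₂^2)) (0,0) := by fun_prop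
    have hnum1 : ContinuousAt (fun q : ℝ × ℝ => -(2*((1-q.1)*u₁ + q.2*u₂))) (0,0) := by
      fun_prop
    have hnum2 : ContinuousAt (fun q : ℝ × ℝ => -(2*(q.2*u₁ + q.1*u₂))) (0,0) := by
      fun_prop
    rw [hGdef]
    exact (continuousAt_const.add ((hnum1.div hden hdenne).smul continuousAt_const)).add
      ((hnum2.div hden hdenne).smul continuousAt_const)
  have hG00 : G (0, 0) = pf := by
    rw [hGq, hpfT, hTdef]
    norm_num
  have hlim : Tendsto (fun n => G (β n^2, α n * β n)) atTop (nhds pf) := by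
    rw [← hG00]
    exact hGcont.tendsto.comp (hβ2.prodMk_nhds hαβ)
  refine Tendsto.congr (fun n => ?_) hlim
  rw [← hkey n, ← hspt_eq n]
end
end

section
/- Let γ:[0,1]→ℝ² be defined by γ(s)=(1/2)(sin(πs), −cos(πs)), a geodesic in H from p=(0,−1/2) to q=(0,1/2) parameterizing a semicircle of radius 1/2. Then there exists a C² function ξ:[0,1]→ℝ², not identically zero, with ξ(0)=ξ(1)=0, solving the Jacobi (linearized geodesic) equation along γ; in other words, the endpoint q is conjugate to p along γ. -/
noncomputable section
open Set Real Filter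
open scoped RealInnerProductSpace
open Topology

/-- The Hessian of W: D²W(x)u = -u/|x|³ + 3⟨x,u⟩x/|x|⁵. -/
def hessW (x u : E2) : E2 := -(‖x‖ ^ 3)⁻¹ • u + (3 * ⟪x, u⟫ * (‖x‖ ^ 5)⁻¹) • x

lemma pt_decomp (a b : ℝ) : pt a b = a • pt 1 0 + b • pt 0 1 := by
  ext i; fin_cases i <;> simp [pt]

lemma pt_add (a b c d : ℝ) : pt a b + pt c d = pt (a+c) (b+d) := by
  ext i; fin_cases i <;> simp [pt]

lemma pt_smul (r a b : ℝ) : r • pt a b = pt (r*a) (r*b) := by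
  ext i; fin_cases i <;> simp [pt]

lemma pt_inner (a b c d : ℝ) : ⟪pt a b, pt c d⟫ = a*c + b*d := by
  simp [pt, PiLp.inner_apply, Fin.sum_univ_two, RCLike.inner_apply]; ring

lemma pt_norm (a b : ℝ) : ‖pt a b‖ = Real.sqrt (a^2 + b^2) := by
  simp [pt, EuclideanSpace.norm_eq, Fin.sum_univ_two, sq_abs]

lemma pt_norm_sq (a b : ℝ) : ‖pt a b‖^2 = a^2 + b^2 := by
  rw [pt_norm, Real.sq_sqrt (by positivity)]

lemma pt_hasDerivAt {f g : ℝ → ℝ} {f' g' : ℝ} {u : ℝ}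
    (hf : HasDerivAt f f' u) (hg : HasDerivAt g g' u) :
    HasDerivAt (fun t => pt (f t) (g t)) (pt f' g') u := by
  have h := (hf.smul_const (pt 1 0)).add (hg.smul_const (pt 0 1))
  simpa [← pt_decomp, Pi.add_def] using h

lemma pt_contDiff {f g : ℝ → ℝ} (hf : ContDiff ℝ 2 f) (hg : ContDiff ℝ 2 g) :
    ContDiff ℝ 2 (fun t => pt (f t) (g t)) := by
  have h := (hf.smul (contDiff_const (c := pt 1 0))).add
    (hg.smul (contDiff_const (c := pt 0 1)))
  simpa [← pt_decomp] using h

lemma pt_eq_zero (a b : ℝ) : pt a b = 0 ↔ a = 0 ∧ b = 0 := by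
  constructor
  · intro h
    refine ⟨?_, ?_⟩
    · have := congrFun (congrArg (WithLp.equiv 2 (Fin 2 → ℝ)) h) 0
      simpa [pt] using this
    · have := congrFun (congrArg (WithLp.equiv 2 (Fin 2 → ℝ)) h) 1
      simpa [pt] using this
  · rintro ⟨rfl, rfl⟩; ext i; fin_cases i <;> simp [pt]

/-- On the semicircular geodesic of radius 1/2 from (0,-1/2) to (0,1/2), the endpoint is
conjugate to the starting point: there is a nontrivial solution of the Jacobi equation
vanishing at both endpoints. -/
theorem semicircle_conjugate_endpoint
    (γ : ℝ → E2) (hγdef : γ = fun s => (1/2 : ℝ) • pt (sin (π * s)) (-cos (π * s))) :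
    ∃ ξ : ℝ → E2,
      ContDiffOn ℝ 2 ξ (Icc 0 1) ∧ (∃ s ∈ Icc (0:ℝ) 1, ξ s ≠ 0) ∧
      ξ 0 = 0 ∧ ξ 1 = 0 ∧
      ∀ s ∈ Ioo (0:ℝ) 1,
        derivWithin
          (fun u => Wf (γ u) • derivWithin ξ (Icc 0 1) u + ⟪gradW (γ u), ξ u⟫ • gvel γ u)
          (Icc 0 1) s
        = ((1/2) * ‖gvel γ s‖ ^ 2) • hessW (γ s) (ξ s)
          + ⟪gvel γ s, derivWithin ξ (Icc 0 1) s⟫ • gradW (γ s) := by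
  -- closed form of γ
  have hγ : ∀ u, γ u = pt (sin (π*u)/2) (-cos (π*u)/2) := by
    intro u; rw [hγdef]; simp only [pt_smul]; congr 1 <;> ring
  -- scalar derivatives
  have hS : ∀ u : ℝ, HasDerivAt (fun t => sin (π*t)) (π * cos (π*u)) u := by
    intro u
    have h := ((hasDerivAt_id u).const_mul π).sin
    simpa [mul_comm] using h
  have hC : ∀ u : ℝ, HasDerivAt (fun t => cos (π*t)) (-(π * sin (π*u))) u := by
    intro u
    have h := ((hasDerivAt_id u).const_mul π).cos
    simpa [mul_comm] using h
  -- velocity of γ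
  set v : ℝ → E2 := fun u => pt (π * cos (π*u)/2) (π * sin (π*u)/2) with hv
  have hγd : ∀ u, HasDerivAt γ (v u) u := by
    intro u
    have h : HasDerivAt (fun t => pt (sin (π*t)/2) (-cos (π*t)/2)) (v u) u :=
      (pt_hasDerivAt ((hS u).div_const 2) (((hC u).neg).div_const 2)).congr_deriv
        (by rw [hv]; congr 1 <;> ring)
    exact h.congr_of_eventuallyEq (Eventually.of_forall fun t => (hγ t))
  -- the Jacobi field ξ(s) = sin(πs) • γ(s)
  set ξ : ℝ → E2 := fun u => pt (sin (π*u) * sin (π*u)/2) (-(sin (π*u) * cos (π*u))/2)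
    with hξ
  set Dξ : ℝ → E2 := fun u =>
      pt (π * (sin (π*u) * cos (π*u))) (π * (sin (π*u) * sin (π*u) - cos (π*u) * cos (π*u)) / 2)
    with hDξ
  have hξd : ∀ u, HasDerivAt ξ (Dξ u) u := by
    intro u
    exact (pt_hasDerivAt (((hS u).mul (hS u)).div_const 2)
        ((((hS u).mul (hC u)).neg).div_const 2)).congr_deriv
      (by rw [hDξ]; congr 1 <;> ring)
  -- basic quantities along γ
  have hnγ : ∀ u, ‖γ u‖ = 1/2 := by
    intro u
    rw [hγ u, pt_norm]
    have h1 : (sin (π*u)/2)^2 + (-cos (π*u)/2)^2 = (1/2:ℝ)^2 := by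
      have h := sin_sq_add_cos_sq (π*u); linear_combination h / 4
    rw [h1, Real.sqrt_sq (by norm_num)]
  have hWf : ∀ u, Wf (γ u) = 1 := by
    intro u; simp only [Wf, hnγ u]; norm_num
  have pt_inj : ∀ a b c d : ℝ, pt a b = pt c d ↔ a = c ∧ b = d := by
    intro a b c d
    constructor
    · intro h
      have h0 := congrFun (congrArg (WithLp.equiv 2 (Fin 2 → ℝ)) h) 0
      have h1 := congrFun (congrArg (WithLp.equiv 2 (Fin 2 → ℝ)) h) 1
      exact ⟨by simpa [pt] using h0, by simpa [pt] using h1⟩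
    · rintro ⟨rfl, rfl⟩; rfl
  have hgrad : ∀ u, gradW (γ u) = pt (-4 * sin (π*u)) (4 * cos (π*u)) := by
    intro u
    simp only [gradW, hnγ u]
    rw [hγ u, pt_smul, pt_inj]
    constructor <;> · norm_num; ring
  refine ⟨ξ, ?_, ?_, ?_, ?_, ?_⟩
  · refine ContDiff.contDiffOn ?_
    have hsin : ContDiff ℝ 2 (fun t : ℝ => sin (π*t)) :=
      (Real.contDiff_sin.of_le le_top).comp (contDiff_const.mul contDiff_id)
    have hcos : ContDiff ℝ 2 (fun t : ℝ => cos (π*t)) :=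
      (Real.contDiff_cos.of_le le_top).comp (contDiff_const.mul contDiff_id)
    exact pt_contDiff ((hsin.mul hsin).div_const 2) (((hsin.mul hcos).neg).div_const 2)
  · refine ⟨1/2, by norm_num, ?_⟩
    have h2 : π * (1/2 : ℝ) = π / 2 := by ring
    rw [hξ]
    simp only [h2, Real.sin_pi_div_two, Real.cos_pi_div_two]
    intro hcon
    rw [show (1:ℝ) * 1 / 2 = 1/2 by norm_num, show -((1:ℝ) * 0)/2 = 0 by norm_num,
      pt_eq_zero] at hcon
    norm_num at hcon
  · rw [hξ]
    simp only [mul_zero, Real.sin_zero, Real.cos_zero, zero_mul, zero_div, neg_zero]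
    exact (pt_eq_zero 0 0).mpr ⟨rfl, rfl⟩
  · rw [hξ]
    simp only [mul_one, Real.sin_pi, Real.cos_pi, zero_mul, zero_div, neg_zero]
    exact (pt_eq_zero 0 0).mpr ⟨rfl, rfl⟩
  · intro s hs
    have hDxi : ∀ u ∈ Ioo (0:ℝ) 1, derivWithin ξ (Icc 0 1) u = Dξ u := by
      intro u hu
      rw [derivWithin_of_mem_nhds (Icc_mem_nhds hu.1 hu.2), (hξd u).deriv]
    have hgv : ∀ u ∈ Ioo (0:ℝ) 1, gvel γ u = v u := by
      intro u hu
      rw [gvel, derivWithin_of_mem_nhds (Icc_mem_nhds hu.1 hu.2), (hγd u).deriv]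
    -- Left side: the flux function is constant pt 0 (-(π/2)) on Ioo 0 1
    have hL : derivWithin
        (fun u => Wf (γ u) • derivWithin ξ (Icc 0 1) u + ⟪gradW (γ u), ξ u⟫ • gvel γ u)
        (Icc 0 1) s = 0 := by
      rw [derivWithin_of_mem_nhds (Icc_mem_nhds hs.1 hs.2)]
      have hev : (fun u => Wf (γ u) • derivWithin ξ (Icc 0 1) u
            + ⟪gradW (γ u), ξ u⟫ • gvel γ u) =ᶠ[𝓝 s] fun _ => pt 0 (-(π/2)) := by
        filter_upwards [isOpen_Ioo.mem_nhds hs] with u hu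
        rw [hWf u, hgrad u, hDxi u hu, hgv u hu, one_smul]
        simp only [hξ, hDξ, hv]
        rw [pt_inner, pt_smul, pt_add, pt_inj]
        have h := sin_sq_add_cos_sq (π*u)
        constructor
        · linear_combination (-(π * sin (π*u) * cos (π*u))) * h
        · linear_combination (-(π * sin (π*u)^2) - π/2) * h
      rw [hev.deriv_eq, deriv_const]
    rw [hL, hgv s hs, hDxi s hs]
    -- Right side vanishes
    have hvn : ‖v s‖^2 = π^2/4 := by
      rw [hv, pt_norm_sq]
      have h := sin_sq_add_cos_sq (π*s)
      linear_combination (π^2/4) * h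
    rw [hvn, hessW, hnγ]
    simp only [hξ, hDξ, hv]
    rw [hgrad s, hγ s, pt_inner, pt_inner, pt_smul, pt_smul, pt_add, pt_smul, pt_smul,
      pt_add, eq_comm, pt_eq_zero]
    have h := sin_sq_add_cos_sq (π*s)
    constructor
    · linear_combination (π^2 * sin (π*s)^2 / 2) * h
    · linear_combination (-(π^2 * sin (π*s) * cos (π*s) / 2)) * h
end
end
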